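/- arXiv:2307.09088 — 3 statements merged into one kernel-verified Lean document; each statement's English description precedes it below -/
import Mathlib

section
/- Let A ⊆ ℝ³ be a measurable set and λ > 0 with vol(A) ≤ (4/3)πλ³. Then for every ξ ∈ ℝ³, the integral over A of ‖ξ−y‖^{−2} dy is at most 4πλ. -/
open MeasureTheory Real Metric Set
open scoped ENNReal

noncomputable section BathtubAux

namespace BathtubAux

local notation "E3" => EuclideanSpace ℝ (Fin 3)

lemma gamma52 : Real.Gamma (3 / 2 + 1) = 3 / 4 * Real.sqrt π := by
  rw [Real.Gamma_add_one (by norm_num)]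
  have h : (3 : ℝ) / 2 = 1 / 2 + 1 := by norm_num
  rw [h, Real.Gamma_add_one (by norm_num), Real.Gamma_one_half_eq]
  ring

lemma volume_ball3 (x : E3) {s : ℝ} (hs : 0 ≤ s) :
    volume (ball x s) = ENNReal.ofReal (4 / 3 * π * s ^ 3) := by
  rw [EuclideanSpace.volume_ball]
  simp only [Fintype.card_fin, Nat.cast_ofNat]
  have hsq : Real.sqrt π ^ 3 / Real.Gamma (3 / 2 + 1) = 4 / 3 * π := by
    rw [gamma52]
    have h2 : Real.sqrt π ^ 3 = π * Real.sqrt π := by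
      rw [pow_succ, Real.sq_sqrt pi_nonneg]
    have hne : Real.sqrt π ≠ 0 := by positivity
    rw [h2, div_eq_iff (by positivity)]
    ring
  rw [hsq, ← ENNReal.ofReal_pow hs, ← ENNReal.ofReal_mul (by positivity)]
  congr 1
  ring

lemma lintegral_fun_norm3 (f : ℝ → ℝ≥0∞) (hf : Measurable f) :
    ∫⁻ x : E3, f ‖x‖ =
      3 * volume (ball (0 : E3) 1) * ∫⁻ y in Ioi (0 : ℝ), ENNReal.ofReal (y ^ 2) * f y := by
  have hdim : Module.finrank ℝ E3 = 3 := by simp [finrank_euclideanSpace]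
  have hsph : (volume : Measure E3).toSphere univ = 3 * volume (ball (0 : E3) 1) := by
    rw [Measure.toSphere_apply_univ, hdim]; norm_num
  have hIoi : ∫⁻ y : Ioi (0 : ℝ), f ↑y ∂(Measure.volumeIoiPow 2)
      = ∫⁻ y in Ioi (0 : ℝ), ENNReal.ofReal (y ^ 2) * f y := by
    calc ∫⁻ y : Ioi (0 : ℝ), f ↑y ∂(Measure.volumeIoiPow 2)
        = ∫⁻ y : Ioi (0 : ℝ), ENNReal.ofReal ((y : ℝ) ^ 2) * f ↑y
            ∂(volume.comap Subtype.val) := by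
          rw [Measure.volumeIoiPow, lintegral_withDensity_eq_lintegral_mul _
            ((measurable_subtype_coe.pow_const 2).ennreal_ofReal)
            (show Measurable fun y : Ioi (0 : ℝ) => f ↑y from hf.comp measurable_subtype_coe)]
          rfl
      _ = ∫⁻ y in Ioi (0 : ℝ), ENNReal.ofReal (y ^ 2) * f y :=
          lintegral_subtype_comap measurableSet_Ioi fun a : ℝ => ENNReal.ofReal (a ^ 2) * f a
  have h2 : Module.finrank ℝ E3 - 1 = 2 := by rw [hdim]
  calc
    ∫⁻ x : E3, f ‖x‖ = ∫⁻ x in ({(0 : E3)}ᶜ : Set E3), f ‖x‖ := by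
      rw [restrict_compl_singleton]
    _ = ∫⁻ x : ({(0 : E3)}ᶜ : Set E3), f ‖x.1‖ ∂(volume.comap Subtype.val) :=
      (lintegral_subtype_comap (measurableSet_singleton _).compl _).symm
    _ = ∫⁻ p : sphere (0 : E3) 1 × Ioi (0 : ℝ), f ↑p.2
          ∂((volume : Measure E3).toSphere.prod (Measure.volumeIoiPow 2)) := by
      rw [← h2,
        ← (Measure.measurePreserving_homeomorphUnitSphereProd (volume : Measure E3)).lintegral_comp
          (f := fun p : sphere (0 : E3) 1 × Ioi (0 : ℝ) => f ↑p.2)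
          (hf.comp (measurable_subtype_coe.comp measurable_snd))]
      exact lintegral_congr fun x => by simp
    _ = (volume : Measure E3).toSphere univ * ∫⁻ y : Ioi (0 : ℝ), f ↑y
          ∂(Measure.volumeIoiPow 2) := by
      calc ∫⁻ p : sphere (0 : E3) 1 × Ioi (0 : ℝ), f ↑p.2
            ∂((volume : Measure E3).toSphere.prod (Measure.volumeIoiPow 2))
          = ∫⁻ _x : sphere (0 : E3) 1, (∫⁻ y : Ioi (0 : ℝ), f ↑y ∂Measure.volumeIoiPow 2)
              ∂(volume : Measure E3).toSphere :=
            lintegral_prod (fun p : sphere (0 : E3) 1 × Ioi (0 : ℝ) => f ↑p.2)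
              ((show Measurable fun p : sphere (0 : E3) 1 × Ioi (0 : ℝ) => f ↑p.2 from
                hf.comp (measurable_subtype_coe.comp measurable_snd)).aemeasurable)
        _ = (volume : Measure E3).toSphere univ * ∫⁻ y : Ioi (0 : ℝ), f ↑y
              ∂Measure.volumeIoiPow 2 := by
            rw [lintegral_const]; exact mul_comm _ _
    _ = 3 * volume (ball (0 : E3) 1) * ∫⁻ y in Ioi (0 : ℝ), ENNReal.ofReal (y ^ 2) * f y := by
      rw [hsph, hIoi]

lemma lintegral_ball_inv_sq {s : ℝ} (hs : 0 < s) :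
    ∫⁻ y in ball (0 : E3) s, ENNReal.ofReal (1 / ‖y‖ ^ 2) = ENNReal.ofReal (4 * π * s) := by
  set f : ℝ → ℝ≥0∞ := fun t => Set.indicator (Iio s) (fun t => ENNReal.ofReal (1 / t ^ 2)) t
    with hfdef
  have hmeasf : Measurable f :=
    Measurable.indicator (by measurability) measurableSet_Iio
  have key : ∫⁻ y in ball (0 : E3) s, ENNReal.ofReal (1 / ‖y‖ ^ 2) = ∫⁻ x : E3, f ‖x‖ := by
    rw [← lintegral_indicator measurableSet_ball]
    refine lintegral_congr fun y => ?_
    simp only [hfdef]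
    by_cases hy : ‖y‖ < s
    · rw [Set.indicator_of_mem (mem_ball_zero_iff.2 hy),
        Set.indicator_of_mem (mem_Iio.2 hy)]
    · rw [Set.indicator_of_notMem (fun h => hy (mem_ball_zero_iff.1 h)),
        Set.indicator_of_notMem (fun h => hy (mem_Iio.1 h))]
  rw [key, lintegral_fun_norm3 f hmeasf]
  have hinner : ∫⁻ y in Ioi (0 : ℝ), ENNReal.ofReal (y ^ 2) * f y = ENNReal.ofReal s := by
    have hcongr : ∫⁻ y in Ioi (0 : ℝ), ENNReal.ofReal (y ^ 2) * f y
        = ∫⁻ y in Ioi (0 : ℝ), Set.indicator (Iio s) (fun _ => (1 : ℝ≥0∞)) y := by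
      refine setLIntegral_congr_fun measurableSet_Ioi (fun y hy => ?_)
      have hy0 : (0 : ℝ) < y := hy
      simp only [hfdef]
      by_cases hys : y < s
      · rw [Set.indicator_of_mem (mem_Iio.2 hys), Set.indicator_of_mem (mem_Iio.2 hys),
          ← ENNReal.ofReal_mul (by positivity), ← ENNReal.ofReal_one]
        congr 1
        field_simp
      · rw [Set.indicator_of_notMem (fun h => hys (mem_Iio.1 h)),
          Set.indicator_of_notMem (fun h => hys (mem_Iio.1 h)), mul_zero]
    rw [hcongr, lintegral_indicator measurableSet_Iio, Measure.restrict_restrict measurableSet_Iio,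
      setLIntegral_one]
    have : Iio s ∩ Ioi (0 : ℝ) = Ioo 0 s := by ext t; simp [and_comm]
    rw [this, Real.volume_Ioo, sub_zero]
  rw [hinner, volume_ball3 _ zero_le_one]
  rw [← ENNReal.ofReal_ofNat 3, ← ENNReal.ofReal_mul (by norm_num),
    ← ENNReal.ofReal_mul (by positivity)]
  congr 1
  ring

end BathtubAux

end BathtubAux

set_option maxHeartbeats 1000000 in
open BathtubAux in
/-- Bathtub-principle bound: if `A ⊆ ℝ³` is measurable with
`vol(A) ≤ (4/3)πr³`, then `∫_A ‖ξ−y‖⁻² dy ≤ 4πr` for every `ξ ∈ ℝ³`. -/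
theorem bathtub_bound_inv_sq
    (A : Set (EuclideanSpace ℝ (Fin 3))) (hA : MeasurableSet A)
    (r : ℝ) (hr : 0 < r)
    (hvol : volume A ≤ ENNReal.ofReal (4 / 3 * Real.pi * r ^ 3)) :
    ∀ ξ : EuclideanSpace ℝ (Fin 3),
      (∫ y in A, 1 / ‖ξ - y‖ ^ 2) ≤ 4 * Real.pi * r := by
  intro ξ
  set B : Set (EuclideanSpace ℝ (Fin 3)) := ball ξ r with hBdef
  have hB : MeasurableSet B := measurableSet_ball
  have hmeas : Measurable fun y : EuclideanSpace ℝ (Fin 3) => 1 / ‖ξ - y‖ ^ 2 := by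
    have : Continuous fun y : EuclideanSpace ℝ (Fin 3) => ‖ξ - y‖ ^ 2 := ((continuous_const.sub continuous_id).norm).pow 2
    simpa [one_div] using this.measurable
  -- translate the ball integral
  have hball : ∫⁻ y in B, ENNReal.ofReal (1 / ‖ξ - y‖ ^ 2) = ENNReal.ofReal (4 * π * r) := by
    have hm : Measurable fun y : EuclideanSpace ℝ (Fin 3) => ξ - y := measurable_const.sub measurable_id
    have hemb : MeasurableEmbedding (fun y : EuclideanSpace ℝ (Fin 3) => ξ - y) :=
      hm.measurableEmbedding fun a b h => sub_right_injective h
    have hmp : MeasurePreserving (fun y : EuclideanSpace ℝ (Fin 3) => ξ - y) volume volume :=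
      Measure.measurePreserving_sub_left volume ξ
    have hpre : (fun y : EuclideanSpace ℝ (Fin 3) => ξ - y) ⁻¹' ball (0 : EuclideanSpace ℝ (Fin 3)) r = ball ξ r := by
      ext y
      simp [mem_ball, dist_eq_norm, norm_sub_rev ξ y]
    rw [hBdef, ← hpre,
      hmp.setLIntegral_comp_preimage_emb hemb (fun z => ENNReal.ofReal (1 / ‖z‖ ^ 2)) _]
    exact lintegral_ball_inv_sq hr
  -- pass to lintegral
  have hnn : (0 : EuclideanSpace ℝ (Fin 3) → ℝ) ≤ᵐ[volume.restrict A] fun y => 1 / ‖ξ - y‖ ^ 2 :=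
    ae_of_all _ fun y => by positivity
  rw [integral_eq_lintegral_of_nonneg_ae hnn hmeas.aestronglyMeasurable]
  have hkey : ∫⁻ y in A, ENNReal.ofReal (1 / ‖ξ - y‖ ^ 2) ≤ ENNReal.ofReal (4 * π * r) := by
    set G : EuclideanSpace ℝ (Fin 3) → ℝ≥0∞ := fun y => ENNReal.ofReal (1 / ‖ξ - y‖ ^ 2) with hGdef
    have hGmeas : Measurable G := hmeas.ennreal_ofReal
    set c : ℝ≥0∞ := ENNReal.ofReal (1 / r ^ 2) with hcdef
    have hvolB : volume B = ENNReal.ofReal (4 / 3 * π * r ^ 3) := volume_ball3 ξ hr.le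
    have hABfin : volume (A ∩ B) ≠ ∞ :=
      (lt_of_le_of_lt (measure_mono inter_subset_right)
        (by rw [hvolB]; exact ENNReal.ofReal_lt_top)).ne
    have hdiff : volume (A \ B) ≤ volume (B \ A) := by
      have h1 : volume (A ∩ B) + volume (A \ B) = volume A := measure_inter_add_diff A hB
      have h2 : volume (A ∩ B) + volume (B \ A) = volume B := by
        rw [inter_comm]; exact measure_inter_add_diff B hA
      rw [← ENNReal.add_le_add_iff_left hABfin, h1, h2, hvolB]
      exact hvol
    have hub : ∫⁻ y in A \ B, G y ≤ c * volume (A \ B) := by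
      rw [← setLIntegral_const]
      refine setLIntegral_mono measurable_const fun y hy => ?_
      have hyB : r ≤ ‖ξ - y‖ := by
        have h := hy.2
        simp only [hBdef, mem_ball, dist_eq_norm, not_lt] at h
        calc r ≤ ‖y - ξ‖ := h
          _ = ‖ξ - y‖ := norm_sub_rev _ _
      exact ENNReal.ofReal_le_ofReal <| by
        apply one_div_le_one_div_of_le (by positivity)
        exact pow_le_pow_left₀ hr.le hyB 2
    have hlb : c * volume (B \ A) ≤ ∫⁻ y in B \ A, G y := by
      rw [← setLIntegral_const]
      refine setLIntegral_mono_ae hGmeas.aemeasurable ?_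
      have hne : ∀ᵐ y : EuclideanSpace ℝ (Fin 3) ∂volume, y ≠ ξ := by
        have h0 : volume ({ξ} : Set (EuclideanSpace ℝ (Fin 3))) = 0 := measure_singleton ξ
        rw [ae_iff]
        convert h0 using 2
        ext y; simp
      filter_upwards [hne] with y hy hmem
      have h1 : ‖ξ - y‖ < r := by
        have h := hmem.1
        simp only [hBdef, mem_ball, dist_eq_norm] at h
        calc ‖ξ - y‖ = ‖y - ξ‖ := norm_sub_rev _ _
          _ < r := h
      have h0 : 0 < ‖ξ - y‖ := by
        rw [norm_pos_iff, sub_ne_zero]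
        exact fun h => hy h.symm
      exact ENNReal.ofReal_le_ofReal <| by
        apply one_div_le_one_div_of_le (by positivity)
        exact pow_le_pow_left₀ h0.le h1.le 2
    calc ∫⁻ y in A, G y = (∫⁻ y in A ∩ B, G y) + ∫⁻ y in A \ B, G y :=
          (lintegral_inter_add_diff _ _ hB).symm
      _ ≤ (∫⁻ y in A ∩ B, G y) + c * volume (A \ B) := add_le_add_right hub _
      _ ≤ (∫⁻ y in A ∩ B, G y) + c * volume (B \ A) :=
          add_le_add_right (mul_le_mul_right hdiff c) _
      _ ≤ (∫⁻ y in A ∩ B, G y) + ∫⁻ y in B \ A, G y := add_le_add_right hlb _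
      _ = (∫⁻ y in B ∩ A, G y) + ∫⁻ y in B \ A, G y := by rw [inter_comm]
      _ = ∫⁻ y in B, G y := lintegral_inter_add_diff _ _ hA
      _ = ENNReal.ofReal (4 * π * r) := hball
  calc (∫⁻ y in A, ENNReal.ofReal (1 / ‖ξ - y‖ ^ 2)).toReal
      ≤ (ENNReal.ofReal (4 * π * r)).toReal :=
        ENNReal.toReal_mono ENNReal.ofReal_ne_top hkey
    _ = 4 * π * r := ENNReal.toReal_ofReal (by positivity)
end

section
/- Let A ⊆ ℝ³ be a measurable set and λ > 0 with vol(A) ≤ (4/3)πλ³. Then for every ξ ∈ ℝ³, the integral over A of ‖ξ−y‖^{−1} dy is at most 2πλ². -/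
open MeasureTheory Real
open Set Metric
open scoped ENNReal NNReal


lemma ball_vol3 (x : EuclideanSpace ℝ (Fin 3)) {R : ℝ} (hR : 0 ≤ R) :
    volume (Metric.ball x R) = ENNReal.ofReal (4 / 3 * π * R ^ 3) := by
  rw [EuclideanSpace.volume_ball]
  have h1 : Real.Gamma (↑(Fintype.card (Fin 3)) / 2 + 1) = 3 / 4 * Real.sqrt π := by
    have : ((Fintype.card (Fin 3) : ℝ) / 2 + 1) = (1/2 + 1) + 1 := by
      simp [Fintype.card_fin]; ring
    rw [this, Real.Gamma_add_one (by norm_num), Real.Gamma_add_one (by norm_num),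
      Real.Gamma_one_half_eq]
    ring
  have h2 : Real.sqrt π ^ Fintype.card (Fin 3) = π * Real.sqrt π := by
    rw [Fintype.card_fin]
    rw [show (3:ℕ) = 2 + 1 from rfl, pow_succ, sq_sqrt Real.pi_pos.le]
  rw [h1, h2]
  have hs : Real.sqrt π > 0 := Real.sqrt_pos.2 Real.pi_pos
  rw [← ENNReal.ofReal_pow hR, ← ENNReal.ofReal_mul (by positivity)]
  congr 1
  rw [Fintype.card_fin]
  field_simp

lemma lint_polar (g : ℝ → ℝ≥0∞) (hg : Measurable g) :
    ∫⁻ (x : EuclideanSpace ℝ (Fin 3)), g ‖x‖ =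
      3 * volume (Metric.ball (0 : EuclideanSpace ℝ (Fin 3)) 1) *
        ∫⁻ y in Ioi (0 : ℝ), ENNReal.ofReal (y ^ 2) * g y := by
  set E := EuclideanSpace ℝ (Fin 3)
  have hdim : Module.finrank ℝ E = 3 := finrank_euclideanSpace_fin
  have h0 : ∫⁻ (x : E), g ‖x‖ =
      ∫⁻ (x : ({(0 : E)}ᶜ : Set E)), g ‖x.1‖ ∂((volume : Measure E).comap Subtype.val) := by
    rw [lintegral_subtype_comap (measurableSet_singleton (0 : E)).compl (fun y => g ‖y‖),
      restrict_compl_singleton]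
  have h1 : (∫⁻ (x : ({(0 : E)}ᶜ : Set E)), g ‖x.1‖ ∂((volume : Measure E).comap Subtype.val)) =
      ∫⁻ (p : Metric.sphere (0 : E) 1 × Ioi (0 : ℝ)),
        g p.2 ∂((volume : Measure E).toSphere.prod
          (Measure.volumeIoiPow (Module.finrank ℝ E - 1))) := by
    rw [← (volume : Measure E).measurePreserving_homeomorphUnitSphereProd.lintegral_comp_emb
      (Homeomorph.measurableEmbedding _) (fun p => g p.2)]
    simp only [homeomorphUnitSphereProd_apply_snd_coe]
  have h2 : (∫⁻ (p : Metric.sphere (0 : E) 1 × Ioi (0 : ℝ)),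
        g p.2 ∂((volume : Measure E).toSphere.prod
          (Measure.volumeIoiPow (Module.finrank ℝ E - 1)))) =
      ((volume : Measure E).toSphere Set.univ) *
        ∫⁻ (y : Ioi (0 : ℝ)), g y ∂(Measure.volumeIoiPow (Module.finrank ℝ E - 1)) := by
    rw [lintegral_prod (fun p : Metric.sphere (0 : E) 1 × Ioi (0 : ℝ) => g ↑p.2)
      (Measurable.aemeasurable (by fun_prop))]
    simp [lintegral_const, mul_comm]
  have h3 : (∫⁻ (y : Ioi (0 : ℝ)), g y ∂(Measure.volumeIoiPow (Module.finrank ℝ E - 1))) =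
      ∫⁻ y in Ioi (0 : ℝ), ENNReal.ofReal (y ^ 2) * g y := by
    rw [hdim]
    show (∫⁻ (y : Ioi (0 : ℝ)), g ↑y ∂(Measure.comap Subtype.val volume).withDensity
        (fun r : Ioi (0 : ℝ) => ENNReal.ofReal (↑r ^ (2 : ℕ)))) = _
    rw [lintegral_withDensity_eq_lintegral_mul _
        ((measurable_subtype_coe.pow_const 2).ennreal_ofReal)
        (show Measurable fun y : Ioi (0 : ℝ) => g ↑y by fun_prop)]
    simp only [Pi.mul_apply]
    rw [lintegral_subtype_comap measurableSet_Ioi (fun y => ENNReal.ofReal (y ^ 2) * g y)]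
  rw [h0, h1, h2, h3, Measure.toSphere_apply_univ, hdim]
  norm_num
  rw [ball_vol3 _ zero_le_one, show (4 / 3 * π * 1 ^ 3 : ℝ) = π * 4 / 3 by ring]

lemma lint_ball {R : ℝ} (hR : 0 < R) :
    (∫⁻ x : EuclideanSpace ℝ (Fin 3) in Metric.ball 0 R, ENNReal.ofReal ‖x‖⁻¹)
      = ENNReal.ofReal (2 * π * R ^ 2) := by
  set E := EuclideanSpace ℝ (Fin 3)
  set g : ℝ → ℝ≥0∞ := (Iio R).indicator (fun y => ENNReal.ofReal y⁻¹) with hgdef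
  have hgm : Measurable g := (measurable_inv.ennreal_ofReal).indicator measurableSet_Iio
  have h1 : (∫⁻ x : E in Metric.ball 0 R, ENNReal.ofReal ‖x‖⁻¹) = ∫⁻ (x : E), g ‖x‖ := by
    rw [← lintegral_indicator measurableSet_ball _]
    refine lintegral_congr fun x => ?_
    by_cases hx : x ∈ Metric.ball (0 : E) R
    · rw [indicator_of_mem hx, hgdef, indicator_of_mem (show ‖x‖ ∈ Iio R from mem_ball_zero_iff.1 hx)]
    · rw [indicator_of_notMem hx, hgdef,
        indicator_of_notMem (show ‖x‖ ∉ Iio R from fun h => hx (mem_ball_zero_iff.2 h))]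
  have h2 : (∫⁻ y in Ioi (0 : ℝ), ENNReal.ofReal (y ^ 2) * g y) =
      ENNReal.ofReal (R ^ 2 / 2) := by
    have e1 : (∫⁻ y in Ioi (0 : ℝ), ENNReal.ofReal (y ^ 2) * g y) =
        ∫⁻ y in Ioi (0 : ℝ),
          (Iio R).indicator (fun y => ENNReal.ofReal (y ^ 2) * ENNReal.ofReal y⁻¹) y := by
      refine lintegral_congr fun y => ?_
      by_cases hy : y ∈ Iio R
      · rw [hgdef, indicator_of_mem hy, indicator_of_mem hy]
      · rw [hgdef, indicator_of_notMem hy, indicator_of_notMem hy, mul_zero]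
    rw [e1, lintegral_indicator measurableSet_Iio _, Measure.restrict_restrict measurableSet_Iio,
      Set.Iio_inter_Ioi]
    have e2 : (∫⁻ y in Ioo (0 : ℝ) R, ENNReal.ofReal (y ^ 2) * ENNReal.ofReal y⁻¹) =
        ∫⁻ y in Ioo (0 : ℝ) R, ENNReal.ofReal y := by
      refine setLIntegral_congr_fun measurableSet_Ioo ?_
      intro y hy
      beta_reduce
      rw [← ENNReal.ofReal_mul (by positivity)]
      congr 1
      field_simp [hy.1.ne']
    rw [e2]
    have hint : IntegrableOn (fun y : ℝ => y) (Ioo 0 R) := by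
      rw [← intervalIntegrable_iff_integrableOn_Ioo_of_le hR.le]
      exact intervalIntegral.intervalIntegrable_id
    rw [← ofReal_integral_eq_lintegral_ofReal hint
      (Filter.Eventually.mono (ae_restrict_mem measurableSet_Ioo) fun y hy => hy.1.le)]
    congr 1
    rw [← integral_Ioc_eq_integral_Ioo, ← intervalIntegral.integral_of_le hR.le,
      integral_id]
    ring
  rw [h1, lint_polar g hgm, h2, ball_vol3 _ (by norm_num : (0:ℝ) ≤ 1)]
  rw [show (3 : ℝ≥0∞) = ENNReal.ofReal 3 by norm_num, ← ENNReal.ofReal_mul (by norm_num),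
    ← ENNReal.ofReal_mul (by positivity)]
  congr 1
  ring

lemma lint_ball_center (ξ : EuclideanSpace ℝ (Fin 3)) {R : ℝ} (hR : 0 < R) :
    (∫⁻ y : EuclideanSpace ℝ (Fin 3) in Metric.ball ξ R, ENNReal.ofReal ‖ξ - y‖⁻¹)
      = ENNReal.ofReal (2 * π * R ^ 2) := by
  have hmp : MeasurePreserving (fun x : EuclideanSpace ℝ (Fin 3) => ξ - x) volume volume :=
    Measure.measurePreserving_sub_left volume ξ
  have hemb : MeasurableEmbedding (fun x : EuclideanSpace ℝ (Fin 3) => ξ - x) :=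
    (MeasurableEquiv.subLeft ξ).measurableEmbedding
  have hinv : Function.Involutive (fun x : EuclideanSpace ℝ (Fin 3) => ξ - x) :=
    fun x => sub_sub_cancel ξ x
  have himg : (fun x : EuclideanSpace ℝ (Fin 3) => ξ - x) '' Metric.ball 0 R
      = Metric.ball ξ R := by
    rw [Set.image_eq_preimage_of_inverse hinv hinv]
    ext x
    simp [Metric.mem_ball, dist_eq_norm, norm_sub_rev]
  have key := hmp.setLIntegral_comp_emb hemb
    (fun y => ENNReal.ofReal ‖ξ - y‖⁻¹) (Metric.ball 0 R)
  rw [himg] at key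
  rw [← key, ← lint_ball hR]
  refine setLIntegral_congr_fun measurableSet_ball ?_
  intro x _
  beta_reduce
  rw [sub_sub_cancel]


/-- Bathtub-principle bound: if `A ⊆ ℝ³` is measurable with
`vol(A) ≤ (4/3)πr³`, then `∫_A ‖ξ−y‖⁻¹ dy ≤ 2πr²` for every `ξ ∈ ℝ³`. -/
theorem bathtub_bound_inv
    (A : Set (EuclideanSpace ℝ (Fin 3))) (hA : MeasurableSet A)
    (r : ℝ) (hr : 0 < r)
    (hvol : volume A ≤ ENNReal.ofReal (4 / 3 * Real.pi * r ^ 3)) :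
    ∀ ξ : EuclideanSpace ℝ (Fin 3),
      (∫ y in A, 1 / ‖ξ - y‖) ≤ 2 * Real.pi * r ^ 2 := by
  intro ξ
  set B := Metric.ball ξ r with hB
  set F : EuclideanSpace ℝ (Fin 3) → ℝ≥0∞ := fun y => ENNReal.ofReal ‖ξ - y‖⁻¹ with hF
  have hFm : Measurable F :=
    ((measurable_const.sub measurable_id).norm.inv).ennreal_ofReal
  have hvolB : volume B = ENNReal.ofReal (4 / 3 * π * r ^ 3) := ball_vol3 ξ hr.le
  have hBfin : volume B ≠ ⊤ := by rw [hvolB]; exact ENNReal.ofReal_ne_top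
  have hABle : volume (A \ B) ≤ volume (B \ A) := by
    have h1 : volume (A ∩ B) + volume (A \ B) = volume A :=
      measure_inter_add_diff A measurableSet_ball
    have h2 : volume (A ∩ B) + volume (B \ A) = volume B := by
      rw [Set.inter_comm]; exact measure_inter_add_diff B hA
    have hfin : volume (A ∩ B) ≠ ⊤ :=
      ne_top_of_le_ne_top hBfin (measure_mono Set.inter_subset_right)
    rw [← ENNReal.add_le_add_iff_left hfin, h1, h2, hvolB]
    exact hvol
  have hout : (∫⁻ y in A \ B, F y) ≤ ENNReal.ofReal r⁻¹ * volume (A \ B) := by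
    rw [← setLIntegral_const (A \ B) (ENNReal.ofReal r⁻¹)]
    refine setLIntegral_mono' (hA.diff measurableSet_ball) fun y hy => ?_
    refine ENNReal.ofReal_le_ofReal ?_
    have hyB : r ≤ ‖ξ - y‖ := by
      have := hy.2
      rw [hB, Metric.mem_ball, not_lt, dist_eq_norm, norm_sub_rev] at this
      exact this
    exact inv_anti₀ hr hyB
  have hin : ENNReal.ofReal r⁻¹ * volume (B \ A) ≤ ∫⁻ y in B \ A, F y := by
    rw [← setLIntegral_const (B \ A) (ENNReal.ofReal r⁻¹)]
    refine setLIntegral_mono_ae' (measurableSet_ball.diff hA) ?_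
    have hne : ∀ᵐ y : EuclideanSpace ℝ (Fin 3) ∂volume, y ≠ ξ := by
      refine ae_iff.2 ?_
      simpa using measure_singleton (μ := (volume : Measure (EuclideanSpace ℝ (Fin 3)))) ξ
    filter_upwards [hne] with y hy hyBA
    have hlt : ‖ξ - y‖ < r := by
      have := hyBA.1
      rw [hB, Metric.mem_ball, dist_eq_norm, norm_sub_rev] at this
      exact this
    have hpos : 0 < ‖ξ - y‖ := by
      rw [norm_pos_iff, sub_ne_zero]
      exact fun h => hy h.symm
    exact ENNReal.ofReal_le_ofReal (inv_anti₀ hpos hlt.le)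
  have hL : (∫⁻ y in A, F y) ≤ ENNReal.ofReal (2 * π * r ^ 2) := by
    calc (∫⁻ y in A, F y) = (∫⁻ y in A ∩ B, F y) + ∫⁻ y in A \ B, F y :=
          (lintegral_inter_add_diff F A measurableSet_ball).symm
      _ ≤ (∫⁻ y in A ∩ B, F y) + ENNReal.ofReal r⁻¹ * volume (A \ B) := by gcongr
      _ ≤ (∫⁻ y in A ∩ B, F y) + ENNReal.ofReal r⁻¹ * volume (B \ A) := by gcongr
      _ ≤ (∫⁻ y in A ∩ B, F y) + ∫⁻ y in B \ A, F y := by gcongr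
      _ = ∫⁻ y in B, F y := by
          rw [Set.inter_comm]; exact lintegral_inter_add_diff F B hA
      _ = ENNReal.ofReal (2 * π * r ^ 2) := lint_ball_center ξ hr
  have hnn : 0 ≤ᵐ[volume.restrict A] fun y : EuclideanSpace ℝ (Fin 3) => 1 / ‖ξ - y‖ :=
    Filter.Eventually.of_forall fun y => by positivity
  rw [integral_eq_lintegral_of_nonneg_ae hnn
    (Measurable.aestronglyMeasurable
      (measurable_const.div ((measurable_const.sub measurable_id').norm)))]
  refine ENNReal.toReal_le_of_le_ofReal (by positivity) ?_
  refine le_trans (le_of_eq ?_) hL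
  refine lintegral_congr fun y => ?_
  rw [one_div]
end

section
/- Fix a > 0, let Q = [−a,a]³ ⊂ ℝ³, and let 0 < p < 1. Then there exists a constant C_p > 0 such that for all points u, v ∈ ℝ³, the integral over Q of the absolute difference |‖y−u‖^{−2} − ‖y−v‖^{−2}| dy is at most C_p ‖u−v‖^p. -/
open MeasureTheory Real Metric
open scoped ENNReal

local notation "E3" => EuclideanSpace ℝ (Fin 3)

/-- one-sided version assuming `r ≤ s` -/
lemma riesz_pointwise_aux {p h r s : ℝ} (hp0 : 0 < p) (hp1 : p < 1)
    (hh : 0 < h) (hr : 0 < r) (hrs : r ≤ s) (hd : s - r ≤ h) :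
    |1 / r ^ 2 - 1 / s ^ 2| ≤ 3 * h ^ p * (r ^ (-(2 + p)) + s ^ (-(2 + p))) := by
  have hs : 0 < s := lt_of_lt_of_le hr hrs
  have habs : |1 / r ^ 2 - 1 / s ^ 2| = 1 / r ^ 2 - 1 / s ^ 2 := by
    rw [abs_of_nonneg]
    have : 1 / s ^ 2 ≤ 1 / r ^ 2 := by
      apply one_div_le_one_div_of_le (by positivity)
      exact pow_le_pow_left₀ hr.le hrs 2
    linarith
  rw [habs]
  have hsnn : (0:ℝ) ≤ s ^ (-(2+p)) := rpow_nonneg hs.le _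
  have key : 1 / r ^ 2 - 1 / s ^ 2 ≤ 3 * h ^ p * r ^ (-(2 + p)) := by
    rcases le_total r h with hcase | hcase
    · -- r ≤ h : crude bound by 1/r²
      have h1 : 1 / r ^ 2 - 1 / s ^ 2 ≤ 1 / r ^ 2 := by
        have : (0:ℝ) ≤ 1 / s ^ 2 := by positivity
        linarith
      have h2 : 1 / r ^ 2 ≤ h ^ p * r ^ (-(2 + p)) := by
        have e : r ^ (-(2+p)) = r ^ (-2 : ℝ) * r ^ (-p) := by
          rw [← Real.rpow_add hr]; ring_nf
        have e2 : r ^ (-2 : ℝ) = 1 / r ^ 2 := by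
          rw [Real.rpow_neg hr.le, Real.rpow_two]
          simp [one_div]
        rw [e, e2]
        have h3 : r ^ p ≤ h ^ p := Real.rpow_le_rpow hr.le hcase hp0.le
        have h4 : (1:ℝ) ≤ h ^ p * r ^ (-p) := by
          have : r ^ p * r ^ (-p) = 1 := by
            rw [← Real.rpow_add hr]; simp
          have h5 : (0:ℝ) < r ^ (-p) := Real.rpow_pos_of_pos hr _
          nlinarith
        nlinarith [one_div_pos.2 (show (0:ℝ) < r ^ 2 by positivity)]
      have h6 : (0:ℝ) ≤ h ^ p * r ^ (-(2+p)) := by positivity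
      linarith
    · -- h ≤ r
      have hsr : s ≤ r + h := by linarith
      have step1 : 1 / r ^ 2 - 1 / s ^ 2 ≤ 3 * h / r ^ 3 := by
        rw [div_sub_div _ _ (by positivity) (by positivity), div_le_div_iff₀ (by positivity) (by positivity)]
        have e1 : s ^ 2 - r ^ 2 ≤ 2 * h * s := by nlinarith
        have e2 : (s ^ 2 - r ^ 2) * r ^ 3 ≤ (2 * h * s) * r ^ 3 :=
          mul_le_mul_of_nonneg_right e1 (by positivity)
        have e3 : r ^ 3 * s ≤ r ^ 2 * s ^ 2 := by nlinarith [mul_le_mul_of_nonneg_left hrs (show (0:ℝ) ≤ r ^ 2 * s by positivity)]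
        nlinarith [mul_pos hh (mul_pos (mul_pos hr hr) hr)]
      have step2 : 3 * h / r ^ 3 ≤ 3 * h ^ p * r ^ (-(2 + p)) := by
        have e : r ^ (-(2+p)) = r ^ (1 - p) / r ^ 3 := by
          rw [← Real.rpow_natCast r 3, ← Real.rpow_sub hr]
          congr 1
          push_cast; ring
        rw [e, ← mul_div_assoc]
        rw [div_le_div_iff₀ (by positivity) (by positivity)]
        have h7 : h = h ^ p * h ^ (1 - p) := by
          rw [← Real.rpow_add hh]; simp
        have h8 : h ^ (1 - p) ≤ r ^ (1 - p) :=
          Real.rpow_le_rpow hh.le hcase (by linarith)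
        have h9 : (0:ℝ) < h ^ p := Real.rpow_pos_of_pos hh _
        calc 3 * h * r ^ 3 = 3 * (h ^ p * h ^ (1-p)) * r ^ 3 := by rw [← h7]
          _ ≤ 3 * (h ^ p * r ^ (1-p)) * r ^ 3 := by nlinarith [mul_le_mul_of_nonneg_right (mul_le_mul_of_nonneg_left h8 h9.le) (pow_pos hr 3).le]
          _ = 3 * h ^ p * r ^ (1-p) * r ^ 3 := by ring
      linarith
  nlinarith [Real.rpow_pos_of_pos hh p]

lemma riesz_pointwise {p h r s : ℝ} (hp0 : 0 < p) (hp1 : p < 1)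
    (hh : 0 < h) (hr : 0 < r) (hs : 0 < s) (hrs : |r - s| ≤ h) :
    |1 / r ^ 2 - 1 / s ^ 2| ≤ 3 * h ^ p * (r ^ (-(2 + p)) + s ^ (-(2 + p))) := by
  rcases le_total r s with hle | hle
  · exact riesz_pointwise_aux hp0 hp1 hh hr hle (by cases abs_le.1 hrs; linarith)
  · rw [abs_sub_comm, add_comm]
    exact riesz_pointwise_aux hp0 hp1 hh hs hle (by cases abs_le.1 hrs; linarith)

lemma riesz_lintegral_ball_lt_top {q : ℝ} (hq0 : 0 ≤ q) (hq3 : q < 3) :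
    ∫⁻ y in ball (0:E3) 1, ENNReal.ofReal (‖y‖ ^ (-q)) < ⊤ := by
  set A : ℕ → Set E3 := fun n => {y | (1/2:ℝ) ^ (n+1) ≤ ‖y‖ ∧ ‖y‖ < (1/2:ℝ) ^ n} with hA
  have hAm : ∀ n, MeasurableSet (A n) := by
    intro n
    have : A n = (fun y : E3 => ‖y‖) ⁻¹' (Set.Ico ((1/2:ℝ)^(n+1)) ((1/2:ℝ)^n)) := rfl
    rw [this]
    exact measurable_norm measurableSet_Ico
  -- coverage
  have hcover : ball (0:E3) 1 ⊆ (⋃ n, A n) ∪ {0} := by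
    intro y hy
    rcases eq_or_ne y 0 with h0 | h0
    · exact Or.inr h0
    · left
      have hy0 : 0 < ‖y‖ := norm_pos_iff.2 h0
      have hy1 : ‖y‖ < 1 := by simpa [mem_ball, dist_eq_norm] using hy
      have hex : ∃ n : ℕ, (1/2:ℝ) ^ (n+1) ≤ ‖y‖ := by
        obtain ⟨n, hn⟩ := exists_pow_lt_of_lt_one hy0 (by norm_num : (1/2:ℝ) < 1)
        exact ⟨n, le_trans (pow_le_pow_of_le_one (by norm_num) (by norm_num)
          (Nat.le_succ n)) hn.le⟩
      classical
      set n := Nat.find hex with hn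
      refine Set.mem_iUnion.2 ⟨n, Nat.find_spec hex, ?_⟩
      rcases Nat.eq_zero_or_pos n with h | h
      · rw [h]; simpa using hy1
      · have := Nat.find_min hex (m := n - 1) (by omega)
        have hne : n - 1 + 1 = n := by omega
        rw [hne] at this
        exact lt_of_not_ge this
  -- termwise bound
  have V : volume (ball (0:E3) 1) < ⊤ := measure_ball_lt_top
  set r : ℝ := (2:ℝ) ^ (q - 3) with hrdef
  have hr1 : r < 1 := by
    rw [hrdef]
    exact Real.rpow_lt_one_of_one_lt_of_neg (by norm_num) (by linarith)
  have hr0 : 0 ≤ r := Real.rpow_nonneg (by norm_num) _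
  have hterm : ∀ n, ∫⁻ y in A n, ENNReal.ofReal (‖y‖ ^ (-q))
      ≤ ENNReal.ofReal ((2:ℝ) ^ q * r ^ n) * volume (ball (0:E3) 1) := by
    intro n
    have hbd : ∀ y ∈ A n, ENNReal.ofReal (‖y‖ ^ (-q))
        ≤ ENNReal.ofReal (((1/2:ℝ) ^ (n+1)) ^ (-q)) := by
      intro y hy
      apply ENNReal.ofReal_le_ofReal
      exact Real.rpow_le_rpow_of_nonpos (by positivity) hy.1 (by linarith)
    calc ∫⁻ y in A n, ENNReal.ofReal (‖y‖ ^ (-q))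
        ≤ ∫⁻ _ in A n, ENNReal.ofReal (((1/2:ℝ) ^ (n+1)) ^ (-q)) :=
          setLIntegral_mono' (hAm n) hbd
      _ = ENNReal.ofReal (((1/2:ℝ) ^ (n+1)) ^ (-q)) * volume (A n) := by
          rw [setLIntegral_const]
      _ ≤ ENNReal.ofReal (((1/2:ℝ) ^ (n+1)) ^ (-q)) * volume (ball (0:E3) ((1/2:ℝ) ^ n)) := by
          apply mul_le_mul_right
          apply measure_mono
          intro y hy
          exact mem_ball_zero_iff.2 hy.2
      _ = ENNReal.ofReal (((1/2:ℝ) ^ (n+1)) ^ (-q)) *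
            (ENNReal.ofReal (((1/2:ℝ) ^ n) ^ (3:ℕ)) * volume (ball (0:E3) 1)) := by
          rw [Measure.addHaar_ball volume 0 (by positivity)]
          norm_num
      _ = ENNReal.ofReal ((2:ℝ) ^ q * r ^ n) * volume (ball (0:E3) 1) := by
          rw [← mul_assoc, ← ENNReal.ofReal_mul (by positivity)]
          congr 2
          have e1 : ((1/2:ℝ) ^ (n+1)) ^ (-q) = (2:ℝ) ^ (((n:ℝ)+1) * q) := by
            have h1 : ((1/2:ℝ) ^ (n+1)) = (2:ℝ) ^ (-((n:ℝ)+1)) := by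
              rw [Real.rpow_neg (by norm_num),
                show ((n:ℝ)+1) = ((n+1 : ℕ) : ℝ) by push_cast; ring, Real.rpow_natCast]
              simp [one_div, inv_pow]
            rw [h1, ← Real.rpow_mul (by norm_num : (0:ℝ) ≤ 2)]
            congr 1; ring
          have e2 : (((1/2:ℝ) ^ n)) ^ (3:ℕ) = (2:ℝ) ^ (-(3*(n:ℝ))) := by
            rw [← pow_mul]
            rw [Real.rpow_neg (by norm_num),
              show (3*(n:ℝ)) = ((n*3 : ℕ) : ℝ) by push_cast; ring, Real.rpow_natCast]
            simp [one_div, inv_pow]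
          have e3 : r ^ n = (2:ℝ) ^ ((q-3)*(n:ℝ)) := by
            rw [hrdef, ← Real.rpow_natCast ((2:ℝ)^(q-3)) n,
              ← Real.rpow_mul (by norm_num : (0:ℝ) ≤ 2)]
          rw [e1, e2, e3, ← Real.rpow_add (by norm_num : (0:ℝ) < 2),
            ← Real.rpow_add (by norm_num : (0:ℝ) < 2)]
          congr 1; ring
  -- assemble
  have hfin : ∑' n, ENNReal.ofReal ((2:ℝ)^q * r^n) * volume (ball (0:E3) 1) < ⊤ := by
    rw [ENNReal.tsum_mul_right]
    have hts : ∀ n : ℕ, ENNReal.ofReal ((2:ℝ)^q * r^n)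
        = ENNReal.ofReal ((2:ℝ)^q) * (ENNReal.ofReal r)^n := by
      intro n; rw [ENNReal.ofReal_mul (by positivity), ENNReal.ofReal_pow hr0]
    rw [tsum_congr hts, ENNReal.tsum_mul_left, ENNReal.tsum_geometric]
    apply ENNReal.mul_lt_top
    · apply ENNReal.mul_lt_top ENNReal.ofReal_lt_top
      exact ENNReal.inv_lt_top.2 (tsub_pos_iff_lt.2 (ENNReal.ofReal_lt_one.2 hr1))
    · exact V
  calc ∫⁻ y in ball (0:E3) 1, ENNReal.ofReal (‖y‖ ^ (-q))
      ≤ ∫⁻ y in (⋃ n, A n) ∪ {0}, ENNReal.ofReal (‖y‖ ^ (-q)) := lintegral_mono_set hcover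
    _ ≤ (∫⁻ y in ⋃ n, A n, ENNReal.ofReal (‖y‖ ^ (-q)))
          + ∫⁻ y in ({0} : Set E3), ENNReal.ofReal (‖y‖ ^ (-q)) := lintegral_union_le _ _ _
    _ = ∫⁻ y in ⋃ n, A n, ENNReal.ofReal (‖y‖ ^ (-q)) := by
        rw [setLIntegral_measure_zero _ _ (measure_singleton 0), add_zero]
    _ ≤ ∑' n, ∫⁻ y in A n, ENNReal.ofReal (‖y‖ ^ (-q)) := lintegral_iUnion_le _ _
    _ ≤ ∑' n, ENNReal.ofReal ((2:ℝ)^q * r^n) * volume (ball (0:E3) 1) :=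
        ENNReal.tsum_le_tsum hterm
    _ < ⊤ := hfin

lemma riesz_cube_measurable (a : ℝ) :
    MeasurableSet {y : E3 | ∀ i, y i ∈ Set.Icc (-a) a} := by
  have : {y : E3 | ∀ i, y i ∈ Set.Icc (-a) a}
      = ⋂ i, (fun y : E3 => y i) ⁻¹' (Set.Icc (-a) a) := by
    ext y; simp [Set.mem_iInter]
  rw [this]
  exact MeasurableSet.iInter fun i =>
    ((EuclideanSpace.proj i).continuous.measurable) measurableSet_Icc

lemma riesz_cube_subset (a : ℝ) (ha : 0 < a) :
    {y : E3 | ∀ i, y i ∈ Set.Icc (-a) a} ⊆ closedBall (0:E3) (3*a) := by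
  intro y hy
  rw [mem_closedBall, dist_zero_right]
  have hsum : ∑ i, ‖y i‖ ^ 2 ≤ (3*a)^2 := by
    have : ∀ i ∈ Finset.univ, ‖y i‖ ^ 2 ≤ a ^ 2 := by
      intro i _
      have h1 := (hy i).1
      have h2 := (hy i).2
      rw [Real.norm_eq_abs, sq_abs]
      nlinarith
    calc ∑ i, ‖y i‖ ^ 2 ≤ ∑ _i : Fin 3, a ^ 2 := Finset.sum_le_sum this
      _ = 3 * a ^ 2 := by simp [Finset.sum_const]
      _ ≤ (3*a)^2 := by nlinarith
  calc ‖y‖ = √(∑ i, ‖y i‖ ^ 2) := EuclideanSpace.norm_eq y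
    _ ≤ √((3*a)^2) := Real.sqrt_le_sqrt hsum
    _ = 3*a := Real.sqrt_sq (by positivity)

lemma riesz_key (a : ℝ) (ha : 0 < a) {q : ℝ} (hq0 : 0 ≤ q) (hq3 : q < 3) :
    ∃ K : ℝ≥0∞, K ≠ ⊤ ∧ ∀ u : E3,
      ∫⁻ y in {y : E3 | ∀ i, y i ∈ Set.Icc (-a) a},
        ENNReal.ofReal (‖y - u‖ ^ (-q)) ≤ K := by
  set Q := {y : E3 | ∀ i, y i ∈ Set.Icc (-a) a} with hQ
  set L := ∫⁻ y in ball (0:E3) 1, ENNReal.ofReal (‖y‖ ^ (-q)) with hL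
  refine ⟨L + volume (closedBall (0:E3) (3*a)), ?_, ?_⟩
  · exact ENNReal.add_ne_top.2 ⟨(riesz_lintegral_ball_lt_top hq0 hq3).ne,
      measure_closedBall_lt_top.ne⟩
  intro u
  have hQm : MeasurableSet Q := riesz_cube_measurable a
  have hsub : Q ⊆ ball u 1 ∪ (Q \ ball u 1) := by
    intro y hy
    by_cases hb : y ∈ ball u 1
    · exact Or.inl hb
    · exact Or.inr ⟨hy, hb⟩
  have htrans : ∫⁻ y in ball u 1, ENNReal.ofReal (‖y - u‖ ^ (-q)) = L := by
    have hpre : (fun x : E3 => x + u) ⁻¹' (ball u 1) = ball (0:E3) 1 := by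
      ext x
      simp [mem_ball, dist_eq_norm]
    have := (measurePreserving_add_right (volume : Measure E3) u).setLIntegral_comp_preimage_emb
      (MeasurableEquiv.addRight u).measurableEmbedding
      (fun y => ENNReal.ofReal (‖y - u‖ ^ (-q))) (ball u 1)
    rw [hpre] at this
    rw [← this, hL]
    apply lintegral_congr
    intro x
    simp
  calc ∫⁻ y in Q, ENNReal.ofReal (‖y - u‖ ^ (-q))
      ≤ ∫⁻ y in ball u 1 ∪ (Q \ ball u 1), ENNReal.ofReal (‖y - u‖ ^ (-q)) :=
        lintegral_mono_set hsub
    _ ≤ (∫⁻ y in ball u 1, ENNReal.ofReal (‖y - u‖ ^ (-q)))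
          + ∫⁻ y in Q \ ball u 1, ENNReal.ofReal (‖y - u‖ ^ (-q)) := lintegral_union_le _ _ _
    _ ≤ L + volume (closedBall (0:E3) (3*a)) := by
        apply add_le_add htrans.le
        calc ∫⁻ y in Q \ ball u 1, ENNReal.ofReal (‖y - u‖ ^ (-q))
            ≤ ∫⁻ _ in Q \ ball u 1, 1 := by
              apply setLIntegral_mono' (hQm.diff measurableSet_ball)
              intro y hy
              have h1 : (1:ℝ) ≤ ‖y - u‖ := by
                have := hy.2
                rw [mem_ball, dist_eq_norm] at this
                linarith [not_lt.1 this]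
              calc ENNReal.ofReal (‖y - u‖ ^ (-q)) ≤ ENNReal.ofReal 1 :=
                    ENNReal.ofReal_le_ofReal
                      (Real.rpow_le_one_of_one_le_of_nonpos h1 (by linarith))
                _ = 1 := ENNReal.ofReal_one
          _ = volume (Q \ ball u 1) := by rw [setLIntegral_const, one_mul]
          _ ≤ volume (closedBall (0:E3) (3*a)) :=
              measure_mono (Set.Subset.trans Set.diff_subset (riesz_cube_subset a ha))

/-- L¹-Hölder continuity of translates of the Riesz kernel `‖·‖⁻²` over
the cube `Q = [−a,a]³`: for `0 < p < 1` there is `C_p > 0` with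
`∫_Q |‖y−u‖⁻² − ‖y−v‖⁻²| dy ≤ C_p ‖u−v‖^p` for all `u, v ∈ ℝ³`. -/
theorem riesz_kernel_translates_L1_holder (a : ℝ) (ha : 0 < a)
    (p : ℝ) (hp0 : 0 < p) (hp1 : p < 1) :
    ∃ C : ℝ, 0 < C ∧
      ∀ u v : EuclideanSpace ℝ (Fin 3),
        (∫ y in {y : EuclideanSpace ℝ (Fin 3) | ∀ i, y i ∈ Set.Icc (-a) a},
          |1 / ‖y - u‖ ^ 2 - 1 / ‖y - v‖ ^ 2|) ≤ C * ‖u - v‖ ^ p := by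
  obtain ⟨K, hKtop, hK⟩ := riesz_key a ha (q := 2 + p) (by linarith) (by linarith)
  set Q := {y : E3 | ∀ i, y i ∈ Set.Icc (-a) a} with hQdef
  have hQm : MeasurableSet Q := riesz_cube_measurable a
  refine ⟨6 * K.toReal + 1, by positivity, ?_⟩
  intro u v
  by_cases huv : u = v
  · subst huv
    simp only [sub_self, abs_zero]
    rw [integral_zero]
    positivity
  · set h := ‖u - v‖ with hh
    have hhpos : 0 < h := by
      rw [hh]; exact norm_pos_iff.2 (sub_ne_zero.2 huv)
    set F : E3 → ℝ := fun y => |1 / ‖y - u‖ ^ 2 - 1 / ‖y - v‖ ^ 2| with hF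
    have hFm : Measurable F := by
      apply Measurable.abs
      apply Measurable.sub
      · exact (measurable_const.div ((measurable_id.sub measurable_const).norm.pow measurable_const))
      · exact (measurable_const.div ((measurable_id.sub measurable_const).norm.pow measurable_const))
    have hFnn : ∀ y, 0 ≤ F y := fun y => abs_nonneg _
    -- a.e. pointwise bound
    have hae : ∀ᵐ y ∂(volume : Measure E3), ENNReal.ofReal (F y) ≤
        ENNReal.ofReal (3 * h ^ p) *
          (ENNReal.ofReal (‖y - u‖ ^ (-(2 + p))) + ENNReal.ofReal (‖y - v‖ ^ (-(2 + p)))) := by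
      have hu : ∀ᵐ y ∂(volume : Measure E3), y ≠ u := by
        rw [ae_iff]
        have : {y : E3 | ¬ y ≠ u} = {u} := by ext y; simp
        rw [this]
        exact measure_singleton u
      have hv : ∀ᵐ y ∂(volume : Measure E3), y ≠ v := by
        rw [ae_iff]
        have : {y : E3 | ¬ y ≠ v} = {v} := by ext y; simp
        rw [this]
        exact measure_singleton v
      filter_upwards [hu, hv] with y hyu hyv
      have hr : 0 < ‖y - u‖ := norm_pos_iff.2 (sub_ne_zero.2 hyu)
      have hs : 0 < ‖y - v‖ := norm_pos_iff.2 (sub_ne_zero.2 hyv)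
      have hdist : |‖y - u‖ - ‖y - v‖| ≤ h := by
        have := abs_norm_sub_norm_le (y - u) (y - v)
        have e : (y - u) - (y - v) = v - u := by abel
        rw [e] at this
        rw [hh, show ‖u - v‖ = ‖v - u‖ from norm_sub_rev u v]
        exact this
      have hpw := riesz_pointwise hp0 hp1 hhpos hr hs hdist
      calc ENNReal.ofReal (F y)
          ≤ ENNReal.ofReal (3 * h ^ p * (‖y - u‖ ^ (-(2 + p)) + ‖y - v‖ ^ (-(2 + p)))) :=
            ENNReal.ofReal_le_ofReal hpw
        _ = ENNReal.ofReal (3 * h ^ p) *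
              (ENNReal.ofReal (‖y - u‖ ^ (-(2 + p))) + ENNReal.ofReal (‖y - v‖ ^ (-(2 + p)))) := by
            rw [ENNReal.ofReal_mul (by positivity),
              ENNReal.ofReal_add (Real.rpow_nonneg (norm_nonneg _) _)
                (Real.rpow_nonneg (norm_nonneg _) _)]
    -- main computation
    have hmeas_u : Measurable fun y : E3 => ENNReal.ofReal (‖y - u‖ ^ (-(2 + p))) := by
      apply ENNReal.measurable_ofReal.comp
      exact ((measurable_id.sub measurable_const).norm.pow_const _)
    have hmeas_v : Measurable fun y : E3 => ENNReal.ofReal (‖y - v‖ ^ (-(2 + p))) := by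
      apply ENNReal.measurable_ofReal.comp
      exact ((measurable_id.sub measurable_const).norm.pow_const _)
    have hint : ∫ y in Q, F y = (∫⁻ y in Q, ENNReal.ofReal (F y)).toReal := by
      rw [integral_eq_lintegral_of_nonneg_ae (ae_of_all _ hFnn)
        (hFm.aestronglyMeasurable.restrict)]
    rw [show (∫ y in Q, |1 / ‖y - u‖ ^ 2 - 1 / ‖y - v‖ ^ 2|) = ∫ y in Q, F y from rfl, hint]
    apply ENNReal.toReal_le_of_le_ofReal (by positivity)
    have hKK : K + K ≤ ENNReal.ofReal (2 * K.toReal) := by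
      rw [two_mul, ENNReal.ofReal_add ENNReal.toReal_nonneg ENNReal.toReal_nonneg,
        ENNReal.ofReal_toReal hKtop]
    calc ∫⁻ y in Q, ENNReal.ofReal (F y)
        ≤ ∫⁻ y in Q, ENNReal.ofReal (3 * h ^ p) *
            (ENNReal.ofReal (‖y - u‖ ^ (-(2 + p))) + ENNReal.ofReal (‖y - v‖ ^ (-(2 + p)))) :=
          lintegral_mono_ae (ae_restrict_of_ae hae)
      _ = ENNReal.ofReal (3 * h ^ p) *
            ((∫⁻ y in Q, ENNReal.ofReal (‖y - u‖ ^ (-(2 + p))))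
              + ∫⁻ y in Q, ENNReal.ofReal (‖y - v‖ ^ (-(2 + p)))) := by
          rw [lintegral_const_mul _ (by have : Measurable fun y => ENNReal.ofReal (‖y - u‖ ^ (-(2 + p))) + ENNReal.ofReal (‖y - v‖ ^ (-(2 + p))) := hmeas_u.add hmeas_v; exact this), lintegral_add_left hmeas_u]
      _ ≤ ENNReal.ofReal (3 * h ^ p) * (K + K) := by
          apply mul_le_mul_right
          exact add_le_add (hK u) (hK v)
      _ ≤ ENNReal.ofReal (3 * h ^ p) * ENNReal.ofReal (2 * K.toReal) := mul_le_mul_right hKK _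
      _ = ENNReal.ofReal (3 * h ^ p * (2 * K.toReal)) :=
          (ENNReal.ofReal_mul (by positivity)).symm
      _ ≤ ENNReal.ofReal ((6 * K.toReal + 1) * h ^ p) := by
          apply ENNReal.ofReal_le_ofReal
          nlinarith [Real.rpow_nonneg hhpos.le p, (ENNReal.toReal_nonneg : 0 ≤ K.toReal)]
end
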